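/- Let d ≥ 1 be an integer, p a prime, x₁, …, x_{2d} ∈ 𝔽_p pairwise distinct elements, y₁, …, y_{2d} ∈ 𝔽_p^* arbitrary, and h ∈ 𝔽_p^*. Then there is at most one monic polynomial f ∈ 𝔽_p[X] of degree at most d such that f(x_i)/f(x_i + h) = y_i for all i = 1, …, 2d (in particular f(x_i + h) ≠ 0 for all i). -/
import Mathlib


open Polynomial

/-- A polynomial of degree `< p` over `ZMod p` invariant under shifting by `h ≠ 0`
is constant. -/
lemma aux_shift_invariant_const (p : ℕ) [Fact p.Prime] (h : ZMod p) (hh : h ≠ 0)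
    (a : Polynomial (ZMod p)) (hdeg : a.natDegree < p)
    (ha : a.comp (X + C h) = a) : a = C (a.eval 0) := by
  have heval : ∀ t : ZMod p, a.eval (t + h) = a.eval t := by
    intro t
    conv_rhs => rw [← ha]
    simp [eval_comp, add_comm]
  have key : ∀ n : ℕ, a.eval ((n : ZMod p) * h) = a.eval 0 := by
    intro n
    induction n with
    | zero => simp
    | succ n ih =>
      have : ((n + 1 : ℕ) : ZMod p) * h = (n : ZMod p) * h + h := by push_cast; ring
      rw [this, heval, ih]
  have hall : ∀ t : ZMod p, a.eval t = a.eval 0 := by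
    intro t
    have ht : ((t * h⁻¹).val : ZMod p) * h = t := by
      rw [ZMod.natCast_val, ZMod.cast_id]
      field_simp
    calc a.eval t = a.eval (((t * h⁻¹).val : ZMod p) * h) := by rw [ht]
      _ = a.eval 0 := key _
  have hzero : a - C (a.eval 0) = 0 := by
    apply Polynomial.eq_zero_of_natDegree_lt_card_of_eval_eq_zero _
      (Function.injective_id (α := ZMod p))
    · intro t
      simp [hall t]
    · calc (a - C (a.eval 0)).natDegree ≤ max a.natDegree (C (a.eval 0)).natDegree :=
            natDegree_sub_le _ _
        _ ≤ max a.natDegree 0 := by simp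
        _ < p := by simpa using hdeg
        _ ≤ Fintype.card (ZMod p) := by rw [ZMod.card]
  linear_combination hzero

/-- If a nonzero polynomial of degree `< p` over `ZMod p` divides its own shift by
`h ≠ 0`, then it is constant. -/
lemma aux_selfdvd_const (p : ℕ) [Fact p.Prime] (h : ZMod p) (hh : h ≠ 0)
    (a : Polynomial (ZMod p)) (ha0 : a ≠ 0) (hdeg : a.natDegree < p)
    (hdvd : a ∣ a.comp (X + C h)) : a = C (a.eval 0) := by
  have hTm : (X + C h : Polynomial (ZMod p)).Monic := monic_X_add_C h
  have hTdeg : (X + C h : Polynomial (ZMod p)).natDegree = 1 := natDegree_X_add_C h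
  have hcompdeg : (a.comp (X + C h)).natDegree = a.natDegree := by
    rw [natDegree_comp, hTdeg, mul_one]
  have hcomplc : (a.comp (X + C h)).leadingCoeff = a.leadingCoeff := by
    rw [leadingCoeff_comp (by rw [hTdeg]; exact one_ne_zero), hTm.leadingCoeff, one_pow, mul_one]
  have hcompne : a.comp (X + C h) ≠ 0 := by
    intro hq'
    apply ha0
    rw [hq', leadingCoeff_zero] at hcomplc
    exact leadingCoeff_eq_zero.mp hcomplc.symm
  obtain ⟨u, hu⟩ := hdvd
  have hu0 : u ≠ 0 := by
    rintro rfl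
    rw [mul_zero] at hu
    exact hcompne hu
  have hund : u.natDegree = 0 := by
    have := hcompdeg
    rw [hu, natDegree_mul ha0 hu0] at this
    omega
  obtain ⟨c, rfl⟩ : ∃ c, u = C c := ⟨u.coeff 0, Polynomial.eq_C_of_natDegree_eq_zero hund⟩
  have hc : a.leadingCoeff * c = a.leadingCoeff := by
    conv_rhs => rw [← hcomplc]
    rw [hu, leadingCoeff_mul, leadingCoeff_C]
  have hc1 : c = 1 := by
    have hlc : a.leadingCoeff ≠ 0 := leadingCoeff_ne_zero.mpr ha0
    exact mul_left_cancel₀ hlc (by rw [hc, mul_one])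
  have haT : a.comp (X + C h) = a := by rw [hu, hc1, map_one, mul_one]
  exact aux_shift_invariant_const p h hh a hdeg haT

/-- At most one monic polynomial `f` of degree at most `d` over `𝔽_p` satisfies
`f(xᵢ)/f(xᵢ+h) = yᵢ` at `2d` pairwise distinct points. -/
theorem stmt_1 (p : ℕ) [Fact p.Prime] (d : ℕ) (hd : 1 ≤ d)
    (x : Fin (2 * d) → ZMod p) (hx : Function.Injective x)
    (y : Fin (2 * d) → ZMod p) (hy : ∀ i, y i ≠ 0) (h : ZMod p) (hh : h ≠ 0)
    (f g : Polynomial (ZMod p))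
    (hfm : f.Monic) (hfd : f.natDegree ≤ d)
    (hgm : g.Monic) (hgd : g.natDegree ≤ d)
    (hf : ∀ i, f.eval (x i + h) ≠ 0 ∧ f.eval (x i) = y i * f.eval (x i + h))
    (hg : ∀ i, g.eval (x i + h) ≠ 0 ∧ g.eval (x i) = y i * g.eval (x i + h)) :
    f = g := by
  have hp2d : 2 * d ≤ p := by
    have := Fintype.card_le_of_injective x hx
    simpa [ZMod.card] using this
  set T : Polynomial (ZMod p) := X + C h with hT
  have hTm : T.Monic := monic_X_add_C h
  have hTdeg : T.natDegree = 1 := natDegree_X_add_C h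
  have hcompdeg : ∀ q : Polynomial (ZMod p), (q.comp T).natDegree = q.natDegree := by
    intro q; rw [natDegree_comp, hTdeg, mul_one]
  have hcomplc : ∀ q : Polynomial (ZMod p), (q.comp T).leadingCoeff = q.leadingCoeff := by
    intro q
    rw [leadingCoeff_comp (by rw [hTdeg]; exact one_ne_zero), hTm.leadingCoeff, one_pow, mul_one]
  have hcompne : ∀ q : Polynomial (ZMod p), q ≠ 0 → q.comp T ≠ 0 := by
    intro q hq hq'
    apply hq
    have := hcomplc q
    rw [hq', leadingCoeff_zero] at this
    exact leadingCoeff_eq_zero.mp this.symm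
  have hevalcomp : ∀ (q : Polynomial (ZMod p)) (t : ZMod p),
      (q.comp T).eval t = q.eval (t + h) := by
    intro q t; simp [hT, eval_comp, add_comm]
  set F := f.comp T with hF
  set G := g.comp T with hG
  -- Step 1 : f * G = g * F
  have hFm : F.Monic := by rw [hF, Monic, hcomplc]; exact hfm
  have hGm : G.Monic := by rw [hG, Monic, hcomplc]; exact hgm
  have hfGm : (f * G).Monic := hfm.mul hGm
  have hgFm : (g * F).Monic := hgm.mul hFm
  have hndfG : (f * G).natDegree = f.natDegree + g.natDegree := by
    rw [hfm.natDegree_mul hGm, hG, hcompdeg]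
  have hndgF : (g * F).natDegree = f.natDegree + g.natDegree := by
    rw [hgm.natDegree_mul hFm, hF, hcompdeg, add_comm]
  have hdegeq : (g * F).degree = (f * G).degree := by
    rw [degree_eq_natDegree hgFm.ne_zero, degree_eq_natDegree hfGm.ne_zero, hndfG, hndgF]
  have hP : f * G - g * F = 0 := by
    by_contra hP
    have hdlt : (f * G - g * F).degree < (f * G).degree :=
      degree_sub_lt hdegeq.symm hfGm.ne_zero (by rw [hfGm.leadingCoeff, hgFm.leadingCoeff])
    have hndlt : (f * G - g * F).natDegree < 2 * d := by
      have := natDegree_lt_natDegree hP hdlt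
      rw [hndfG] at this
      omega
    apply hP
    apply Polynomial.eq_zero_of_natDegree_lt_card_of_eval_eq_zero _ hx
    · intro i
      have h1 := (hf i).2
      have h2 := (hg i).2
      simp only [eval_sub, eval_mul, hG, hF, hevalcomp]
      rw [h1, h2]
      ring
    · simpa using hndlt
  have heq : f * G = g * F := sub_eq_zero.mp hP
  -- Step 2 : use gcd to conclude f = g
  set D := GCDMonoid.gcd f g with hD
  have hD0 : D ≠ 0 := by
    rw [hD, Ne, gcd_eq_zero_iff]
    rintro ⟨rfl, -⟩
    exact hfm.ne_zero rfl
  set a := f / D with ha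
  set b := g / D with hb
  have hfa : D * a = f := EuclideanDomain.mul_div_cancel' hD0 (gcd_dvd_left f g)
  have hgb : D * b = g := EuclideanDomain.mul_div_cancel' hD0 (gcd_dvd_right f g)
  have hcop : IsCoprime a b := isCoprime_div_gcd_div_gcd hgm.ne_zero
  have ha0 : a ≠ 0 := by
    intro ha0'
    apply hfm.ne_zero
    rw [← hfa, ha0', mul_zero]
  have hb0 : b ≠ 0 := by
    intro hb0'
    apply hgm.ne_zero
    rw [← hgb, hb0', mul_zero]
  have hkey : a * b.comp T = b * a.comp T := by
    have hthis := heq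
    rw [← hfa, ← hgb, hG, hF, ← hfa, ← hgb, mul_comp, mul_comp] at hthis
    have hDT : D * D.comp T ≠ 0 := mul_ne_zero hD0 (hcompne D hD0)
    apply mul_left_cancel₀ hDT
    linear_combination hthis
  have hdp : d < p := by omega
  have hand : a.natDegree < p := by
    have : f.natDegree = D.natDegree + a.natDegree := by
      rw [← hfa, natDegree_mul hD0 ha0]
    omega
  have hbnd : b.natDegree < p := by
    have : g.natDegree = D.natDegree + b.natDegree := by
      rw [← hgb, natDegree_mul hD0 hb0]
    omega
  have haC : a = C (a.eval 0) := by
    apply aux_selfdvd_const p h hh a ha0 hand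
    exact hcop.dvd_of_dvd_mul_left ⟨b.comp T, hkey.symm⟩
  have hbC : b = C (b.eval 0) := by
    apply aux_selfdvd_const p h hh b hb0 hbnd
    exact hcop.symm.dvd_of_dvd_mul_left ⟨a.comp T, hkey⟩
  -- leading coefficients force the constants to coincide
  have hlca : D.leadingCoeff * a.eval 0 = 1 := by
    have := hfm
    rw [Monic, ← hfa, haC, leadingCoeff_mul, leadingCoeff_C] at this
    exact this
  have hlcb : D.leadingCoeff * b.eval 0 = 1 := by
    have := hgm
    rw [Monic, ← hgb, hbC, leadingCoeff_mul, leadingCoeff_C] at this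
    exact this
  have hab : a = b := by
    rw [haC, hbC]
    congr 1
    have hlcD : D.leadingCoeff ≠ 0 := leadingCoeff_ne_zero.mpr hD0
    exact mul_left_cancel₀ hlcD (by rw [hlca, hlcb])
  rw [← hfa, ← hgb, hab]
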